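/- A residuated lattice A is quasicomplemented and weakly disjunctive if and only if the lattice of principal filters of A is a Boolean lattice. -/

import Mathlib

/-!
In any residuated lattice `F(x ⊙ (y ∨ z)) = F(x ⊙ y) ∩ F(x ⊙ z)`, because `⊙` distributes over `∨`
and `(a ∨ b)^(mn) ≤ a^n ∨ b^m`; so the lattice of principal filters is always distributive, and it
is Boolean exactly when every `F(x)` has a complement `F(y)`, i.e. `x ∨ y = 1` and `x ⊙ y` is
nilpotent. Such a `y` satisfies `x^⊥⊥ = y^⊥`, since `(x ⊙ y)^⊥ = x^⊥ ∩ y^⊥` is then `{1}`. It also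
gives weak disjunctivity: if `x^⊥ = v^⊥` then `v ∨ y = 1`, hence `x^n = x^n ⊙ (v ∨ y^n) ≤ v`.
Conversely, for a quasicomplement `y` of `x` we get `x ∨ y = 1` and `(x ⊙ y)^⊥ = {1} = ⊥^⊥`, so weak
disjunctivity makes `F(x ⊙ y) = F(⊥)` the whole lattice.
-/

/-- A (bounded, integral, commutative) residuated lattice. -/
class ResLattice (A : Type*) extends Lattice A, CommMonoid A, OrderBot A where
  himp : A → A → A
  adjunction : ∀ x y z : A, x * y ≤ z ↔ x ≤ himp y z
  le_one : ∀ x : A, x ≤ 1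

variable {A : Type*} [ResLattice A]

/-- Coannihilator of a subset: `X^⊥ = {a | a ⊔ x = 1 for all x ∈ X}`. -/
def Coann (X : Set A) : Set A := {a | ∀ x ∈ X, a ⊔ x = 1}

/-- Coannulet of an element: `x^⊥`. -/
def rperp (x : A) : Set A := Coann {x}

/-- The principal filter generated by `x`. -/
def PFil (x : A) : Set A := {a | ∃ n : ℕ, 0 < n ∧ x ^ n ≤ a}

/-- Filters of a residuated lattice. -/
def IsRLFilter (F : Set A) : Prop :=
  F.Nonempty ∧ (∀ x ∈ F, ∀ y ∈ F, x * y ∈ F) ∧ (∀ x ∈ F, ∀ y : A, x ⊔ y ∈ F)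

/-- Prime filters. -/
def IsRLPrime (P : Set A) : Prop :=
  IsRLFilter P ∧ P ≠ Set.univ ∧ ∀ x y : A, x ⊔ y ∈ P → x ∈ P ∨ y ∈ P

/-- Minimal prime filters. -/
def IsRLMinPrime (P : Set A) : Prop :=
  IsRLPrime P ∧ ∀ Q : Set A, IsRLPrime Q → Q ⊆ P → Q = P

/-- Quasicomplemented residuated lattice. -/
def Quasicomplemented (A : Type*) [ResLattice A] : Prop :=
  ∀ x : A, ∃ y : A, Coann (rperp x) = rperp y

/-- α-filters. -/
def IsAlphaFilter (F : Set A) : Prop :=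
  IsRLFilter F ∧ ∀ x ∈ F, Coann (rperp x) ⊆ F

/-- The α-filter generated by a subset. -/
def alphaGen (X : Set A) : Set A := ⋂₀ {G : Set A | IsAlphaFilter G ∧ X ⊆ G}

namespace ResLattice

instance : IsOrderedMonoid A where
  mul_le_mul_left a b hab c :=
    (adjunction a c (b * c)).2 (hab.trans ((adjunction b c (b * c)).1 le_rfl))

lemma mul_le_left (a b : A) : a * b ≤ a := mul_le_of_le_one_right' (le_one b)

lemma mul_le_right (a b : A) : a * b ≤ b := mul_le_of_le_one_left' (le_one a)

protected lemma sup_mul (a b c : A) : (a ⊔ b) * c = a * c ⊔ b * c :=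
  le_antisymm
    ((adjunction _ _ _).2 <|
      sup_le ((adjunction _ _ _).1 le_sup_left) ((adjunction _ _ _).1 le_sup_right))
    (sup_le (mul_le_mul' le_sup_left le_rfl) (mul_le_mul' le_sup_right le_rfl))

protected lemma mul_sup (a b c : A) : a * (b ⊔ c) = a * b ⊔ a * c := by
  simp only [mul_comm a, ResLattice.sup_mul]

lemma one_le_iff {a : A} : 1 ≤ a ↔ a = 1 :=
  ⟨fun h ↦ le_antisymm (le_one a) h, fun h ↦ h.ge⟩

lemma sup_mul_sup_le (a b c : A) : (c ⊔ a) * (c ⊔ b) ≤ c ⊔ a * b := by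
  rw [ResLattice.sup_mul, ResLattice.mul_sup, ResLattice.mul_sup]
  exact sup_le (sup_le ((mul_le_left c c).trans le_sup_left) ((mul_le_left c b).trans le_sup_left))
    (sup_le ((mul_le_right a c).trans le_sup_left) le_sup_right)

lemma sup_pow_le (a c : A) (n : ℕ) : (c ⊔ a) ^ n ≤ c ⊔ a ^ n := by
  induction n with
  | zero => simp
  | succ n ih =>
    calc (c ⊔ a) ^ (n + 1) = (c ⊔ a) ^ n * (c ⊔ a) := pow_succ _ _
      _ ≤ (c ⊔ a ^ n) * (c ⊔ a) := mul_le_mul' ih le_rfl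
      _ ≤ c ⊔ a ^ (n + 1) := by rw [pow_succ]; exact sup_mul_sup_le _ _ _

lemma sup_pow_mul_le (a b : A) (m n : ℕ) : (a ⊔ b) ^ (m * n) ≤ a ^ n ⊔ b ^ m :=
  calc (a ⊔ b) ^ (m * n) = ((a ⊔ b) ^ m) ^ n := pow_mul _ _ _
    _ ≤ (a ⊔ b ^ m) ^ n := pow_le_pow_left' (sup_pow_le b a m) n
    _ ≤ a ^ n ⊔ b ^ m := by simpa only [sup_comm] using sup_pow_le a (b ^ m) n

lemma pow_sup_pow_eq_one {a b : A} (h : a ⊔ b = 1) (m n : ℕ) : a ^ n ⊔ b ^ m = 1 :=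
  one_le_iff.1 (by simpa only [h, one_pow] using sup_pow_mul_le a b m n)

lemma pow_le_of_sup_eq_one {u v y : A} {n : ℕ} (hv : y ⊔ v = 1) (hn : (u * y) ^ n = ⊥) :
    u ^ n ≤ v :=
  calc u ^ n = u ^ n * (y ^ n ⊔ v) := by rw [← pow_one v, pow_sup_pow_eq_one hv, mul_one]
    _ = u ^ n * v := by rw [ResLattice.mul_sup, ← mul_pow, hn, bot_sup_eq]
    _ ≤ v := mul_le_right _ _

end ResLattice

open ResLattice

lemma one_mem_Coann (X : Set A) : (1 : A) ∈ Coann X :=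
  fun x _ ↦ sup_eq_left.2 (le_one x)

lemma Coann_inter_Coann_Coann (X : Set A) : Coann X ∩ Coann (Coann X) = {1} := by
  refine Set.Subset.antisymm (fun a ⟨ha, ha'⟩ ↦ ?_) ?_
  · simpa using ha' a ha
  · rintro _ rfl
    exact ⟨one_mem_Coann _, one_mem_Coann _⟩

lemma mem_rperp {a x : A} : a ∈ rperp x ↔ a ⊔ x = 1 := by
  simp [rperp, Coann]

lemma mem_rperp_of_le {a b x : A} (ha : a ∈ rperp x) (hab : a ≤ b) : b ∈ rperp x :=
  mem_rperp.2 <| one_le_iff.1 <| mem_rperp.1 ha ▸ sup_le_sup_right hab x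

lemma mem_Coann_rperp_self (x : A) : x ∈ Coann (rperp x) :=
  fun _ hb ↦ by rw [sup_comm]; exact mem_rperp.1 hb

lemma rperp_mul (x y : A) : rperp (x * y) = rperp x ∩ rperp y := by
  ext a
  simp only [Set.mem_inter_iff, mem_rperp]
  refine ⟨fun h ↦ ⟨?_, ?_⟩, fun ⟨hx, hy⟩ ↦ ?_⟩
  · exact one_le_iff.1 (h ▸ sup_le_sup_left (mul_le_left x y) a)
  · exact one_le_iff.1 (h ▸ sup_le_sup_left (mul_le_right x y) a)
  · exact one_le_iff.1 (by simpa only [hx, hy, mul_one] using sup_mul_sup_le x y a)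

lemma rperp_of_pow_eq_bot {x : A} {n : ℕ} (h : x ^ n = ⊥) : rperp x = {1} := by
  refine Set.Subset.antisymm (fun a ha ↦ ?_) ?_
  · simpa [h] using pow_sup_pow_eq_one (mem_rperp.1 ha) n 1
  · rintro _ rfl
    exact one_mem_Coann _

lemma mem_PFil_self (x : A) : x ∈ PFil x := ⟨1, one_pos, (pow_one x).le⟩

lemma PFil_subset_of_mem {x y : A} (h : y ∈ PFil x) : PFil y ⊆ PFil x := by
  obtain ⟨m, hm, hxy⟩ := h
  rintro a ⟨n, hn, hya⟩
  exact ⟨m * n, Nat.mul_pos hm hn, by rw [pow_mul]; exact (pow_le_pow_left' hxy n).trans hya⟩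

lemma PFil_sup (x y : A) : PFil (x ⊔ y) = PFil x ∩ PFil y := by
  ext a
  refine ⟨fun ⟨n, hn, h⟩ ↦ ⟨⟨n, hn, ?_⟩, ⟨n, hn, ?_⟩⟩, fun ⟨⟨n, hn, hx⟩, ⟨m, hm, hy⟩⟩ ↦ ?_⟩
  · exact (pow_le_pow_left' le_sup_left n).trans h
  · exact (pow_le_pow_left' le_sup_right n).trans h
  · exact ⟨m * n, Nat.mul_pos hm hn, (sup_pow_mul_le x y m n).trans (sup_le hx hy)⟩

lemma PFil_mul_sup (x y z : A) : PFil (x * (y ⊔ z)) = PFil (x * y) ∩ PFil (x * z) := by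
  rw [ResLattice.mul_sup, PFil_sup]

lemma PFil_eq_singleton_one_iff {x : A} : PFil x = {1} ↔ x = 1 := by
  refine ⟨fun h ↦ Set.mem_singleton_iff.1 (h ▸ mem_PFil_self x), ?_⟩
  rintro rfl
  ext a
  simp only [PFil, one_pow, one_le_iff, Set.mem_ofPred_eq, Set.mem_singleton_iff]
  exact ⟨fun ⟨_, _, h⟩ ↦ h, fun h ↦ ⟨1, one_pos, h⟩⟩

lemma PFil_inter_eq_singleton_one_iff {x y : A} : PFil x ∩ PFil y = {1} ↔ x ⊔ y = 1 := by
  rw [← PFil_sup, PFil_eq_singleton_one_iff]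

lemma PFil_eq_univ_iff {x : A} : PFil x = Set.univ ↔ ∃ n, 0 < n ∧ x ^ n = ⊥ := by
  refine ⟨fun h ↦ ?_, fun ⟨n, hn, h⟩ ↦ Set.eq_univ_of_forall fun a ↦ ⟨n, hn, h ▸ bot_le⟩⟩
  obtain ⟨n, hn, hle⟩ : (⊥ : A) ∈ PFil x := h ▸ Set.mem_univ _
  exact ⟨n, hn, le_bot_iff.1 hle⟩

lemma exists_sup_eq_one_and_pow_mul_eq_bot (hqc : Quasicomplemented A)
    (hwd : ∀ x y : A, rperp x = rperp y → PFil x = PFil y) (x : A) :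
    ∃ y, x ⊔ y = 1 ∧ ∃ n, 0 < n ∧ (x * y) ^ n = ⊥ := by
  obtain ⟨y, hy⟩ := hqc x
  have hxy : x ⊔ y = 1 := mem_rperp.1 (hy ▸ mem_Coann_rperp_self x)
  have hperp : rperp (x * y) = rperp ⊥ := by
    rw [rperp_mul, ← hy, rperp_of_pow_eq_bot (pow_one (⊥ : A))]
    exact Coann_inter_Coann_Coann _
  refine ⟨y, hxy, PFil_eq_univ_iff.1 ?_⟩
  rw [hwd _ _ hperp, PFil_eq_univ_iff]
  exact ⟨1, one_pos, pow_one _⟩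

lemma Coann_rperp_eq_rperp {x y : A} {n : ℕ} (hxy : x ⊔ y = 1) (hn : (x * y) ^ n = ⊥) :
    Coann (rperp x) = rperp y := by
  ext a
  refine ⟨fun ha ↦ mem_rperp.2 (ha y (mem_rperp.2 (by rwa [sup_comm]))), fun ha b hb ↦ ?_⟩
  have hab : a ⊔ b ∈ rperp (x * y) :=
    rperp_mul x y ▸ ⟨mem_rperp_of_le hb le_sup_right, mem_rperp_of_le ha le_sup_left⟩
  rwa [rperp_of_pow_eq_bot hn] at hab

lemma PFil_eq_of_rperp_eq (hc : ∀ x : A, ∃ y, x ⊔ y = 1 ∧ ∃ n, 0 < n ∧ (x * y) ^ n = ⊥)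
    {u v : A} (h : rperp u = rperp v) : PFil u = PFil v := by
  have mem_PFil : ∀ {u v : A}, rperp u = rperp v → v ∈ PFil u := by
    intro u v h
    obtain ⟨y, hy, n, hn, hnil⟩ := hc u
    have hyv : y ∈ rperp v := h ▸ mem_rperp.2 (by rwa [sup_comm])
    exact ⟨n, hn, pow_le_of_sup_eq_one (mem_rperp.1 hyv) hnil⟩
  exact (PFil_subset_of_mem (mem_PFil h.symm)).antisymm (PFil_subset_of_mem (mem_PFil h))

theorem stmt8 :
    (Quasicomplemented A ∧ ∀ x y : A, rperp x = rperp y → PFil x = PFil y) ↔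
      ((∀ x y z : A, PFil (x * (y ⊔ z)) = PFil (x * y) ∩ PFil (x * z)) ∧
        ∀ x : A, ∃ y : A, PFil x ∩ PFil y = {1} ∧ PFil (x * y) = Set.univ) := by
  simp only [PFil_mul_sup, PFil_inter_eq_singleton_one_iff, PFil_eq_univ_iff, implies_true,
    true_and]
  refine ⟨fun ⟨hqc, hwd⟩ ↦ exists_sup_eq_one_and_pow_mul_eq_bot hqc hwd,
    fun hc ↦ ⟨fun x ↦ ?_, fun _ _ ↦ PFil_eq_of_rperp_eq hc⟩⟩
  obtain ⟨y, hxy, n, -, hn⟩ := hc x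
  exact ⟨y, Coann_rperp_eq_rperp hxy hn⟩
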